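/- Let n ≥ 3 be an integer, let Σ be a topological space, let κ : Σ → ℝ^{n-1} be continuous, and let x₀ ∈ Σ be a point at which all n-1 components of κ(x₀) are positive. For each 1 ≤ k ≤ n-1, let G_k denote the connected component of the open set {x ∈ Σ : σ_k(κ(x)) > 0} containing x₀. Then for every 1 ≤ k ≤ n-1 one has G_k = G_1 ∩ G_2 ∩ … ∩ G_k; in particular G_{k+1} ⊆ G_k for each 1 ≤ k ≤ n-2. -/

import Mathlib

/-!
For `κ ∈ ℝ^m`, if `σ_j(κ) ≥ 0` for `1 ≤ j ≤ k` and `σ_k(κ) > 0`, then `σ_j(κ) > 0` for all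
`1 ≤ j ≤ k`: by Rolle, the `(m - k)`-th derivative of `∏ i, (X + κ i)` is a real-rooted
polynomial of degree `k` whose coefficients are positive multiples of `σ_k, …, σ_0`; having
nonnegative coefficients and positive constant term, it has only negative roots, so all its
coefficients are positive. Hence, inside `{x : σ_k(κ x) > 0}`, the preimage of the Gårding cone
`Γ_k` is open and closed and contains `x₀`, so it contains `G_k`; thus `G_k ⊆ {σ_j(κ x) > 0}`
for `j ≤ k`, and `G_k ⊆ G_j` by connectedness.
-/

/-- The `j`-th elementary symmetric polynomial of `κ = (κ_1, …, κ_m) ∈ ℝ^m`,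
with the conventions `σ_0 = 1` and `σ_j = 0` for `j > m`. -/
noncomputable def esymm (m j : ℕ) (κ : Fin m → ℝ) : ℝ :=
  ∑ s ∈ Finset.powersetCard j (Finset.univ : Finset (Fin m)), ∏ i ∈ s, κ i

/-- `σ_{k;i}(κ)`: the `k`-th elementary symmetric polynomial of the `m - 1` numbers
`κ_1, …, κ_{i-1}, κ_{i+1}, …, κ_m`. -/
noncomputable def esymmWithout (m k : ℕ) (i : Fin m) (κ : Fin m → ℝ) : ℝ :=
  ∑ s ∈ Finset.powersetCard k ((Finset.univ : Finset (Fin m)).erase i), ∏ j ∈ s, κ j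

/-- The Gårding cone `Γ_k^+ = {κ ∈ ℝ^m : σ_j(κ) > 0 for j = 1, …, k}`. -/
def gardingCone (m k : ℕ) : Set (Fin m → ℝ) :=
  {κ | ∀ j, 1 ≤ j → j ≤ k → 0 < esymm m j κ}

open Polynomial

theorem Multiset.esymm_pos {R : Type*} [CommSemiring R] [PartialOrder R] [IsStrictOrderedRing R]
    {s : Multiset R} (hs : ∀ x ∈ s, 0 < x) {j : ℕ} (hj : j ≤ card s) : 0 < s.esymm j := by
  have hne : s.powersetCard j ≠ 0 := by
    rw [Ne, ← card_eq_zero, card_powersetCard]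
    exact (Nat.choose_pos hj).ne'
  simpa [esymm] using sum_lt_sum_of_nonempty (f := fun _ => (0 : R)) (g := prod) hne
    fun t ht => prod_pos fun x hx => hs x (mem_of_le (mem_powersetCard.1 ht).1 hx)

theorem esymm_eq_multiset_esymm (m j : ℕ) (κ : Fin m → ℝ) :
    esymm m j κ = (Finset.univ.val.map κ).esymm j :=
  (Finset.esymm_map_val κ _ j).symm

theorem esymm_pos_of_forall_pos {m j : ℕ} (hj : j ≤ m) {κ : Fin m → ℝ}
    (hκ : ∀ i, 0 < κ i) : 0 < esymm m j κ := by
  rw [esymm_eq_multiset_esymm]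
  exact Multiset.esymm_pos (by simpa using fun i => hκ i) (by simpa using hj)

theorem esymm_zero (m : ℕ) (κ : Fin m → ℝ) : esymm m 0 κ = 1 := by
  simp [esymm]

theorem esymm_eq_zero_of_lt {m j : ℕ} (h : m < j) (κ : Fin m → ℝ) : esymm m j κ = 0 := by
  rw [esymm, Finset.powersetCard_eq_empty.2 (by simpa using h), Finset.sum_empty]

theorem continuous_esymm (m j : ℕ) : Continuous (esymm m j) := by
  unfold esymm
  fun_prop

namespace Polynomial

theorem natDegree_finsetProd_X_add_C_eq_card {R ι : Type*} [CommRing R] [Nontrivial R]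
    (s : Finset ι) (f : ι → R) : (∏ i ∈ s, (X + C (f i))).natDegree = s.card := by
  rw [natDegree_prod_of_monic _ _ fun i _ => monic_X_add_C _]
  simp

theorem Splits.derivative_real {p : ℝ[X]} (hp : p.Splits) : (derivative p).Splits := by
  rw [splits_iff_card_roots] at hp ⊢
  refine le_antisymm (card_roots' _) ?_
  have := card_roots_le_derivative p
  have := natDegree_derivative_le p
  omega

theorem Splits.iterate_derivative_real {p : ℝ[X]} (hp : p.Splits) (t : ℕ) :
    (derivative^[t] p).Splits := by
  induction t with
  | zero => exact hp
  | succ t ih => rw [Function.iterate_succ_apply']; exact ih.derivative_real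

theorem coeff_pos_of_splits {p : ℝ[X]} (hp : p.Splits) (hnn : ∀ j, 0 ≤ p.coeff j)
    (h0 : 0 < p.coeff 0) {j : ℕ} (hj : j ≤ p.natDegree) : 0 < p.coeff j := by
  have hroots : ∀ r ∈ p.roots, r < 0 := by
    intro r hr
    by_contra! hr0
    have : 0 < p.eval r := by
      rw [eval_eq_sum_range]
      exact Finset.sum_pos' (fun i _ => mul_nonneg (hnn i) (pow_nonneg hr0 i))
        ⟨0, by simp, by simpa using h0⟩
    exact this.ne' (isRoot_of_mem_roots hr)
  have hlc : 0 < p.leadingCoeff := (hnn _).lt_of_ne' (leadingCoeff_ne_zero.2 (by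
    rintro rfl; simp at h0))
  rw [coeff_eq_esymm_roots_of_splits hp hj, mul_assoc, ← Multiset.esymm_neg]
  refine mul_pos hlc (Multiset.esymm_pos ?_ ?_)
  · simp only [Multiset.mem_map]
    rintro _ ⟨r, hr, rfl⟩
    exact neg_pos.2 (hroots r hr)
  · rw [Multiset.card_map, splits_iff_card_roots.1 hp]
    exact Nat.sub_le _ _

end Polynomial

theorem coeff_iterate_derivative_prod_X_add_C {m k j : ℕ} (hk : k ≤ m) (hj : j ≤ k)
    (κ : Fin m → ℝ) :
    (derivative^[m - k] (∏ i, (X + C (κ i)))).coeff j =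
      (j + (m - k)).descFactorial (m - k) * esymm m (k - j) κ := by
  rw [coeff_iterate_derivative, nsmul_eq_mul,
    Finset.prod_X_add_C_coeff _ _ (by simp only [Finset.card_univ, Fintype.card_fin]; omega)]
  simp only [Finset.card_univ, Fintype.card_fin]
  rw [show m - (j + (m - k)) = k - j by omega]
  rfl

theorem mem_gardingCone_of_nonneg {m k : ℕ} {κ : Fin m → ℝ}
    (hnn : ∀ j, 1 ≤ j → j ≤ k → 0 ≤ esymm m j κ) (hk : 0 < esymm m k κ) :
    κ ∈ gardingCone m k := by
  have hkm : k ≤ m := by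
    by_contra! h
    exact hk.ne' (esymm_eq_zero_of_lt h κ)
  set g := derivative^[m - k] (∏ i, (X + C (κ i)))
  have hcoeff := fun j (hj : j ≤ k) => coeff_iterate_derivative_prod_X_add_C hkm hj κ
  have hfac : ∀ j : ℕ, (0 : ℝ) < (j + (m - k)).descFactorial (m - k) := fun j =>
    Nat.cast_pos.2 (Nat.descFactorial_pos.2 (by omega))
  have hdeg : g.natDegree = k := by
    refine natDegree_eq_of_le_of_coeff_ne_zero ?_ ?_
    · refine (natDegree_iterate_derivative _ _).trans ?_
      rw [natDegree_finsetProd_X_add_C_eq_card, Finset.card_univ, Fintype.card_fin]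
      omega
    · rw [hcoeff k le_rfl, Nat.sub_self, esymm_zero, mul_one]
      exact (hfac k).ne'
  have hsplit : g.Splits :=
    (Splits.prod fun i _ => Splits.X_add_C (κ i)).iterate_derivative_real _
  have hcoeff_nonneg : ∀ j, 0 ≤ g.coeff j := by
    intro j
    rcases le_or_gt j k with hj | hj
    · rw [hcoeff j hj]
      refine mul_nonneg (hfac j).le ?_
      rcases Nat.eq_zero_or_pos (k - j) with h | h
      · rw [h, esymm_zero]; exact zero_le_one
      · exact hnn _ h (Nat.sub_le _ _)
    · rw [coeff_eq_zero_of_natDegree_lt (hdeg ▸ hj)]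
  have hcoeff_zero : 0 < g.coeff 0 := by
    rw [hcoeff 0 (Nat.zero_le _), Nat.sub_zero]
    exact mul_pos (hfac 0) hk
  intro j _ hjk
  have := coeff_pos_of_splits hsplit hcoeff_nonneg hcoeff_zero (j := k - j) (by omega)
  rw [hcoeff _ (Nat.sub_le _ _), Nat.sub_sub_self hjk] at this
  exact pos_of_mul_pos_right this (hfac _).le

theorem isOpen_gardingCone (m k : ℕ) : IsOpen (gardingCone m k) := by
  have : gardingCone m k = ⋂ j ∈ Finset.Icc 1 k, {κ | 0 < esymm m j κ} := by
    ext; simp [gardingCone]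
  rw [this]
  exact isOpen_biInter_finset fun j _ => isOpen_lt continuous_const (continuous_esymm m j)

theorem esymm_nonneg_of_mem_closure_gardingCone {m k j : ℕ} {κ : Fin m → ℝ}
    (hκ : κ ∈ closure (gardingCone m k)) (hj : 1 ≤ j) (hjk : j ≤ k) : 0 ≤ esymm m j κ :=
  closure_lt_subset_le continuous_const (continuous_esymm m j)
    (closure_mono (s := gardingCone m k) (fun _ h => h j hj hjk) hκ)

section Topology

variable {X : Type*} [TopologicalSpace X] {m : ℕ} {κ : X → Fin m → ℝ}

theorem connectedComponentIn_esymm_pos_subset_gardingCone (hκ : Continuous κ) {x₀ : X} {k : ℕ}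
    (hx₀ : κ x₀ ∈ gardingCone m k) :
    connectedComponentIn {x | 0 < esymm m k (κ x)} x₀ ⊆ κ ⁻¹' gardingCone m k := by
  rcases (connectedComponentIn {x | 0 < esymm m k (κ x)} x₀).eq_empty_or_nonempty with h | h
  · simp [h]
  refine isPreconnected_connectedComponentIn.subset_of_closure_inter_subset
    ((isOpen_gardingCone m k).preimage hκ)
    ⟨x₀, mem_connectedComponentIn (connectedComponentIn_nonempty_iff.1 h), hx₀⟩ ?_
  rintro x ⟨hx, hxC⟩
  exact mem_gardingCone_of_nonneg
    (fun j => esymm_nonneg_of_mem_closure_gardingCone (hκ.closure_preimage_subset _ hx))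
    (connectedComponentIn_subset {x | 0 < esymm m k (κ x)} x₀ hxC)

theorem connectedComponentIn_esymm_pos_subset {x₀ : X} (hκ : Continuous κ)
    (hx₀ : ∀ i, 0 < κ x₀ i) {j k : ℕ} (hj : 1 ≤ j) (hjk : j ≤ k) (hkm : k ≤ m) :
    connectedComponentIn {x | 0 < esymm m k (κ x)} x₀ ⊆
      connectedComponentIn {x | 0 < esymm m j (κ x)} x₀ := by
  have hx₀k : x₀ ∈ {x | 0 < esymm m k (κ x)} := esymm_pos_of_forall_pos hkm hx₀
  refine isPreconnected_connectedComponentIn.subset_connectedComponentIn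
    (mem_connectedComponentIn hx₀k) fun x hx => ?_
  exact connectedComponentIn_esymm_pos_subset_gardingCone hκ
    (fun i _ hik => esymm_pos_of_forall_pos (hik.trans hkm) hx₀) hx j hj hjk

end Topology

theorem stmt_5_general (n : ℕ)
    (X : Type*) [TopologicalSpace X]
    (κ : X → Fin (n - 1) → ℝ) (hκ : Continuous κ)
    (x₀ : X) (hx₀ : ∀ i, 0 < κ x₀ i)
    (G : ℕ → Set X)
    (hG : ∀ k, G k = connectedComponentIn {x | 0 < esymm (n - 1) k (κ x)} x₀) :
    (∀ k, 1 ≤ k → k ≤ n - 1 → G k = ⋂ j ∈ Finset.Icc 1 k, G j) ∧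
    (∀ k, 1 ≤ k → k ≤ n - 2 → G (k + 1) ⊆ G k) := by
  have hG_mono : ∀ j k, 1 ≤ j → j ≤ k → k ≤ n - 1 → G k ⊆ G j := by
    intro j k hj hjk hkn
    rw [hG, hG]
    exact connectedComponentIn_esymm_pos_subset hκ hx₀ hj hjk hkn
  refine ⟨fun k hk hkn => ?_, fun k hk hkn => hG_mono k (k + 1) hk k.le_succ (by omega)⟩
  refine (Set.subset_iInter₂ fun j hj => ?_).antisymm
    (Set.biInter_subset_of_mem (Finset.mem_Icc.2 ⟨hk, le_rfl⟩))
  exact hG_mono j k (Finset.mem_Icc.1 hj).1 (Finset.mem_Icc.1 hj).2 hkn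

/-- The Claim inside Lemma 4: with `G_k` the connected component of `x₀` in
`{x : σ_k(κ(x)) > 0}`, one has `G_k = G_1 ∩ ⋯ ∩ G_k`; in particular
`G_{k+1} ⊆ G_k`. -/
theorem stmt_5 (n : ℕ) (hn : 3 ≤ n)
    (X : Type*) [TopologicalSpace X]
    (κ : X → Fin (n - 1) → ℝ) (hκ : Continuous κ)
    (x₀ : X) (hx₀ : ∀ i, 0 < κ x₀ i)
    (G : ℕ → Set X)
    (hG : ∀ k, G k = connectedComponentIn {x | 0 < esymm (n - 1) k (κ x)} x₀) :
    (∀ k, 1 ≤ k → k ≤ n - 1 → G k = ⋂ j ∈ Finset.Icc 1 k, G j) ∧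
    (∀ k, 1 ≤ k → k ≤ n - 2 → G (k + 1) ⊆ G k) :=
  stmt_5_general n X κ hκ x₀ hx₀ G hG
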